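/- arXiv:2410.18602 — 2 statements merged into one kernel-verified Lean document; each statement's English description precedes it below -/
import Mathlib

section
/- PDA is individually rational: for every buyer i with true type θ_i, every report profile θ'_{-i} of the other buyers, and every order o ∈ O(V), if i reports truthfully then u_i^o(θ_i, (θ_i, θ'_{-i})) ≥ 0; in particular her expected utility over the uniformly random order is non-negative. -/
namespace DA

open scoped Classical

/-- A report profile for selling `k` homogeneous items: each agent reports a
valuation over quantities `0, …, k` and a set of neighbors. -/
structure Profile (V : Type*) (k : ℕ) where
  val : V → ℕ → ℝ
  nbr : V → Set V

/-- A valuation is valid if it is normalized (`v 0 = 0`) and has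
non-increasing marginals on `{0, …, k}`. -/
def ValidVal (k : ℕ) (v : ℕ → ℝ) : Prop :=
  v 0 = 0 ∧ ∀ q : ℕ, q + 2 ≤ k → v (q + 2) - v (q + 1) ≤ v (q + 1) - v q

variable {V : Type*}

/-- A profile is valid (w.r.t. seller `s`) if every buyer's valuation is valid. -/
def Profile.Valid {k : ℕ} (θ : Profile V k) (s : V) : Prop :=
  ∀ i : V, i ≠ s → ValidVal k (θ.val i)

/-- The reported (undirected) adjacency: `{i, j}` is an edge whenever
`j ∈ r'_i` (or symmetrically `i ∈ r'_j`). -/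
def Profile.adj {k : ℕ} (θ : Profile V k) (i j : V) : Prop :=
  j ∈ θ.nbr i ∨ i ∈ θ.nbr j

/-- The feasible set `F(θ', B)` of a coalition `B`: the buyers in `B` that are
connected to the seller `s` by a path of reported edges lying inside `B`
(empty if `s ∉ B`). -/
def Profile.feasible {k : ℕ} (θ : Profile V k) (s : V) (B : Set V) : Set V :=
  {i | i ≠ s ∧ i ∈ B ∧ s ∈ B ∧
    Relation.ReflTransGen (fun a b => θ.adj a b ∧ a ∈ B ∧ b ∈ B) s i}

/-- Updating agent `i`'s report in a profile. -/
def updateAgent [DecidableEq V] {k : ℕ} (θ : Profile V k) (i : V)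
    (v : ℕ → ℝ) (r : Set V) : Profile V k :=
  ⟨Function.update θ.val i v, Function.update θ.nbr i r⟩

/-- The profile `θ'_B` obtained by removing (setting to nil) the reports of
all agents outside the coalition `B`. -/
noncomputable def Profile.restrict {k : ℕ} (θ : Profile V k) (B : Set V) : Profile V k :=
  ⟨fun i q => if i ∈ B then θ.val i q else 0,
   fun i => if i ∈ B then θ.nbr i ∩ B else ∅⟩

section Homogeneous

variable [Fintype V] [DecidableEq V]

/-- Social welfare of an allocation `π` under reports `θ`. -/
def SW {k : ℕ} (θ : Profile V k) (s : V) (π : V → ℕ) : ℝ :=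
  ∑ i ∈ Finset.univ.erase s, θ.val i (π i)

/-- The allocations admissible for a coalition `B` with irrevocable prior
allocation `πhat`: at most `k` items in total are allocated (none to the
seller), only buyers in `F(θ, B)` receive items, and nobody receives fewer
items than in `πhat`. -/
def feasAllocs {k : ℕ} (θ : Profile V k) (s : V) (B : Set V) (πhat : V → ℕ) :
    Set (V → ℕ) :=
  {π | π s = 0 ∧ (∑ i ∈ Finset.univ.erase s, π i) ≤ k ∧
    (∀ i, i ∉ θ.feasible s B → π i = 0) ∧ ∀ j, j ≠ s → πhat j ≤ π j}

/-- `SW*(θ, B, πhat)`: the maximum social welfare over the admissible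
allocations for coalition `B` with prior allocation `πhat`. -/
noncomputable def SWstar {k : ℕ} (θ : Profile V k) (s : V) (B : Set V)
    (πhat : V → ℕ) : ℝ :=
  sSup (SW θ s '' feasAllocs θ s B πhat)

/-- A chosen allocation attaining `SW*(θ, B, πhat)`. -/
noncomputable def bestAlloc {k : ℕ} (θ : Profile V k) (s : V) (B : Set V)
    (πhat : V → ℕ) : V → ℕ :=
  Classical.epsilon fun π =>
    π ∈ feasAllocs θ s B πhat ∧ SW θ s π = SWstar θ s B πhat

/-- `o_{≺i}`: the set of agents strictly preceding `i` in the order `o`. -/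
def pred (o : V ≃ Fin (Fintype.card V)) (i : V) : Set V := {j | o j < o i}

/-- `o_{≼i} = o_{≺i} ∪ {i}`. -/
def predeq (o : V ≃ Fin (Fintype.card V)) (i : V) : Set V := {j | o j ≤ o i}

/-- The partial allocation produced by PDA after the first `t` agents of the
order `o` have been traversed: the seller is skipped, and each traversed buyer
`i` receives her share in a chosen allocation attaining
`SW*(θ, o_{≼i}, π^{o≺i})`, earlier allocations being irrevocable. -/
noncomputable def pdaStep {k : ℕ} (θ : Profile V k) (s : V)
    (o : V ≃ Fin (Fintype.card V)) : ℕ → V → ℕ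
  | 0 => fun _ => 0
  | t + 1 =>
    if h : t < Fintype.card V then
      let i := o.symm ⟨t, h⟩
      if i = s then pdaStep θ s o t
      else Function.update (pdaStep θ s o t) i
        (bestAlloc θ s (predeq o i) (pdaStep θ s o t) i)
    else pdaStep θ s o t

/-- `π^{o≺i}`: the allocation fixed by PDA right before agent `i` is traversed. -/
noncomputable def pdaPrior {k : ℕ} (θ : Profile V k) (s : V)
    (o : V ≃ Fin (Fintype.card V)) (i : V) : V → ℕ :=
  pdaStep θ s o (o i : ℕ)

/-- The final allocation `π^o` produced by PDA under the order `o`. -/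
noncomputable def pdaAlloc {k : ℕ} (θ : Profile V k) (s : V)
    (o : V ≃ Fin (Fintype.card V)) : V → ℕ :=
  pdaStep θ s o (Fintype.card V)

/-- The payment charged by PDA to agent `i` under the order `o`:
`p_i = SW*(θ, o_{≺i}, π^{o≺i}) − SW*(θ, o_{≼i}, π^{o≺i}) + v'_i(π_i)`, except
that agents traversed after all `k` items have been allocated pay `0`
(and the seller pays nothing). -/
noncomputable def pdaPay {k : ℕ} (θ : Profile V k) (s : V)
    (o : V ≃ Fin (Fintype.card V)) (i : V) : ℝ :=
  if i = s then 0
  else if (∑ j ∈ Finset.univ.erase s, pdaPrior θ s o i j) = k then 0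
  else SWstar θ s (pred o i) (pdaPrior θ s o i)
    - SWstar θ s (predeq o i) (pdaPrior θ s o i)
    + θ.val i (pdaAlloc θ s o i)

/-- `u_i^o`: the utility of buyer `i` with true valuation `v` under order `o`. -/
noncomputable def pdaUtil {k : ℕ} (v : ℕ → ℝ) (θ : Profile V k) (s : V)
    (o : V ≃ Fin (Fintype.card V)) (i : V) : ℝ :=
  v (pdaAlloc θ s o i) - pdaPay θ s o i

/-- `E_PDA(u_i)`: buyer `i`'s expected utility over the uniformly random order. -/
noncomputable def pdaExpUtil {k : ℕ} (v : ℕ → ℝ) (θ : Profile V k) (s : V)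
    (i : V) : ℝ :=
  (∑ o : V ≃ Fin (Fintype.card V), pdaUtil v θ s o i) /
    ((Fintype.card V).factorial : ℝ)

/-- `μ(θ)`: the fraction of orders for which PDA terminates with no item sold. -/
noncomputable def mu {k : ℕ} (θ : Profile V k) (s : V) : ℝ :=
  (Nat.card {o : V ≃ Fin (Fintype.card V) // ∀ j, pdaAlloc θ s o j = 0} : ℝ) /
    ((Fintype.card V).factorial : ℝ)

/-- The Shapley contribution `φ_i(θ)` of agent `i`. -/
noncomputable def shapley {k : ℕ} (θ : Profile V k) (s : V) (i : V) : ℝ :=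
  ∑ B ∈ (Finset.univ.erase i).powerset,
    ((B.card.factorial * (Fintype.card V - B.card - 1).factorial : ℝ) /
      ((Fintype.card V).factorial : ℝ)) *
    (SWstar θ s (↑(insert i B)) 0 - SWstar θ s (↑B) 0)

end Homogeneous

/-! A truthful buyer who is reached after all items are sold receives nothing and pays nothing.
Otherwise her payment is designed so that her utility is `SW*(o_{≼i}) − SW*(o_{≺i})` (both with
the prior allocation `π^{o≺i}`), and this is non-negative because a larger coalition only admits
more allocations. Both maxima are attained: the sets of admissible allocations are finite, and
nonempty because the allocation fixed so far is itself admissible for `o_{≺i}`. -/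

theorem Profile.feasible_mono {k : ℕ} (θ : Profile V k) (s : V) {B B' : Set V} (h : B ⊆ B') :
    θ.feasible s B ⊆ θ.feasible s B' := by
  rintro i ⟨his, hiB, hsB, hpath⟩
  exact ⟨his, h hiB, h hsB,
    Relation.ReflTransGen.mono (fun a b hab => ⟨hab.1, h hab.2.1, h hab.2.2⟩) _ _ hpath⟩

theorem pred_subset_predeq [Fintype V] (o : V ≃ Fin (Fintype.card V)) (i : V) :
    pred o i ⊆ predeq o i :=
  fun j (hj : o j < o i) => show o j ≤ o i from hj.le

section IndividualRationality

variable [Fintype V] [DecidableEq V] {k : ℕ} (θ : Profile V k) (s : V)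

theorem feasAllocs_mono {B B' : Set V} (h : B ⊆ B') (πhat : V → ℕ) :
    feasAllocs θ s B πhat ⊆ feasAllocs θ s B' πhat := by
  rintro π ⟨hs, hsum, hsupp, hge⟩
  exact ⟨hs, hsum, fun j hj => hsupp j fun hjB => hj (θ.feasible_mono s h hjB), hge⟩

theorem feasAllocs_finite (B : Set V) (πhat : V → ℕ) : (feasAllocs θ s B πhat).Finite := by
  refine (Set.Finite.pi fun _ : V => Set.finite_Iic k).subset ?_
  rintro π ⟨hs, hsum, -, -⟩ j -
  by_cases hj : j = s
  · simp [hj, hs]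
  · exact (Finset.single_le_sum (fun _ _ => Nat.zero_le _)
      (Finset.mem_erase.mpr ⟨hj, Finset.mem_univ j⟩)).trans hsum

theorem bestAlloc_spec {B : Set V} {πhat : V → ℕ} (hne : (feasAllocs θ s B πhat).Nonempty) :
    bestAlloc θ s B πhat ∈ feasAllocs θ s B πhat ∧
      SW θ s (bestAlloc θ s B πhat) = SWstar θ s B πhat :=
  Classical.epsilon_spec
    ((hne.image (SW θ s)).csSup_mem ((feasAllocs_finite θ s B πhat).image _))

theorem SWstar_mono {B B' : Set V} (h : B ⊆ B') {πhat : V → ℕ}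
    (hne : (feasAllocs θ s B πhat).Nonempty) : SWstar θ s B πhat ≤ SWstar θ s B' πhat :=
  csSup_le_csSup ((feasAllocs_finite θ s B' πhat).image _).bddAbove (hne.image _)
    (Set.image_mono (feasAllocs_mono θ s h πhat))

theorem eq_of_mem_feasAllocs_of_sum_eq {B : Set V} {πhat π : V → ℕ}
    (hπ : π ∈ feasAllocs θ s B πhat) (hfull : ∑ j ∈ Finset.univ.erase s, πhat j = k)
    {j : V} (hj : j ≠ s) : π j = πhat j := by
  obtain ⟨-, hsum, -, hge⟩ := hπ
  have hle : ∀ j ∈ Finset.univ.erase s, πhat j ≤ π j :=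
    fun j hj => hge j (Finset.ne_of_mem_erase hj)
  have heq := le_antisymm (Finset.sum_le_sum hle) (hsum.trans hfull.ge)
  exact ((Finset.sum_eq_sum_iff_of_le hle).mp heq j
    (Finset.mem_erase.mpr ⟨hj, Finset.mem_univ j⟩)).symm

theorem mem_feasAllocs_self_of_le {B : Set V} {πhat β γ : V → ℕ}
    (hβ : β ∈ feasAllocs θ s B πhat) (hγs : γ s = 0)
    (hγβ : ∀ j, j ≠ s → γ j ≤ β j) :
    γ ∈ feasAllocs θ s B γ := by
  obtain ⟨-, hsum, hsupp, -⟩ := hβ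
  refine ⟨hγs, ?_, fun j hj => ?_, fun _ _ => le_rfl⟩
  · exact (Finset.sum_le_sum fun j hj => hγβ j (Finset.ne_of_mem_erase hj)).trans hsum
  · by_cases hjs : j = s
    · rwa [hjs]
    · exact Nat.eq_zero_of_le_zero (hsupp j hj ▸ hγβ j hjs)

variable (o : V ≃ Fin (Fintype.card V))

theorem pdaStep_succ_apply_of_ne {i : V} {t : ℕ} (hit : (o i : ℕ) ≠ t) :
    pdaStep θ s o (t + 1) i = pdaStep θ s o t i := by
  rw [pdaStep]
  dsimp only
  split_ifs
  · rfl
  · exact Function.update_of_ne (fun h => hit (by rw [h, Equiv.apply_symm_apply])) _ _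
  · rfl

theorem pdaStep_mem_feasAllocs (t : ℕ) :
    pdaStep θ s o t ∈ feasAllocs θ s {j | (o j : ℕ) < t} (pdaStep θ s o t) := by
  induction t with
  | zero => exact ⟨rfl, by simp [pdaStep], fun _ _ => rfl, fun _ _ => le_rfl⟩
  | succ t ih =>
    have hmono : {j | (o j : ℕ) < t} ⊆ {j | (o j : ℕ) < t + 1} :=
      fun _ hj => Nat.lt_succ_of_lt hj
    rw [pdaStep]
    dsimp only
    split_ifs with ht has
    · exact feasAllocs_mono θ s hmono _ ih
    · set a := o.symm ⟨t, ht⟩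
      have hB : predeq o a = {j | (o j : ℕ) < t + 1} := by
        ext j
        simp [predeq, a, Fin.le_def]
      obtain ⟨hβ, -⟩ := bestAlloc_spec θ s ⟨_, feasAllocs_mono θ s (hB ▸ hmono) _ ih⟩
      rw [← hB]
      refine mem_feasAllocs_self_of_le θ s hβ ?_ fun j hj => ?_
      · rw [Function.update_of_ne (Ne.symm has)]
        exact ih.1
      · rcases eq_or_ne j a with rfl | hja
        · simp
        · rw [Function.update_of_ne hja]
          exact hβ.2.2.2 j hj
    · exact feasAllocs_mono θ s hmono _ ih

theorem pdaPrior_mem_feasAllocs (i : V) :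
    pdaPrior θ s o i ∈ feasAllocs θ s (pred o i) (pdaPrior θ s o i) :=
  pdaStep_mem_feasAllocs θ s o (o i)

theorem pdaStep_apply_of_le {i : V} {t : ℕ} (ht : t ≤ o i) : pdaStep θ s o t i = 0 := by
  induction t with
  | zero => rfl
  | succ t ih =>
    rw [pdaStep_succ_apply_of_ne θ s o (by omega)]
    exact ih (by omega)

theorem pdaPrior_self (i : V) : pdaPrior θ s o i i = 0 :=
  pdaStep_apply_of_le θ s o le_rfl

theorem pdaAlloc_eq_bestAlloc {i : V} (hi : i ≠ s) :
    pdaAlloc θ s o i = bestAlloc θ s (predeq o i) (pdaPrior θ s o i) i := by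
  have hstep : pdaStep θ s o (o i + 1) i = bestAlloc θ s (predeq o i) (pdaPrior θ s o i) i := by
    rw [pdaStep, dif_pos (o i).isLt]
    simp [hi, pdaPrior]
  have hlater :
      ∀ t, (o i : ℕ) + 1 ≤ t → pdaStep θ s o t i = pdaStep θ s o (o i + 1) i := by
    intro t ht
    induction t, ht using Nat.le_induction with
    | base => rfl
    | succ t ht ih => rw [pdaStep_succ_apply_of_ne θ s o (by omega), ih]
  rw [pdaAlloc, hlater _ (o i).isLt, hstep]

theorem pdaAlloc_eq_zero_of_prior_full {i : V} (hi : i ≠ s)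
    (hfull : ∑ j ∈ Finset.univ.erase s, pdaPrior θ s o i j = k) : pdaAlloc θ s o i = 0 := by
  have hne : (feasAllocs θ s (predeq o i) (pdaPrior θ s o i)).Nonempty :=
    ⟨_, feasAllocs_mono θ s (pred_subset_predeq o i) _ (pdaPrior_mem_feasAllocs θ s o i)⟩
  rw [pdaAlloc_eq_bestAlloc θ s o hi,
    eq_of_mem_feasAllocs_of_sum_eq θ s (bestAlloc_spec θ s hne).1 hfull hi, pdaPrior_self]

theorem SWstar_pred_le_predeq (i : V) :
    SWstar θ s (pred o i) (pdaPrior θ s o i) ≤ SWstar θ s (predeq o i) (pdaPrior θ s o i) :=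
  SWstar_mono θ s (pred_subset_predeq o i) ⟨_, pdaPrior_mem_feasAllocs θ s o i⟩

theorem pdaUtil_truthful_nonneg {i : V} (hi : i ≠ s) (hv : θ.val i 0 = 0) :
    0 ≤ pdaUtil (θ.val i) θ s o i := by
  rw [pdaUtil, pdaPay, if_neg hi]
  split_ifs with hfull
  · rw [pdaAlloc_eq_zero_of_prior_full θ s o hi hfull, hv, sub_zero]
  · linarith [SWstar_pred_le_predeq θ s o i]

end IndividualRationality

end DA

theorem pda_IR_general {V : Type*} [Fintype V] [DecidableEq V]
    {k : ℕ} (θ : DA.Profile V k) (s : V) (hθ : θ.Valid s)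
    (i : V) (hi : i ≠ s) :
    (∀ o : V ≃ Fin (Fintype.card V), 0 ≤ DA.pdaUtil (θ.val i) θ s o i)
    ∧ 0 ≤ DA.pdaExpUtil (θ.val i) θ s i := by
  have hIR : ∀ o, 0 ≤ DA.pdaUtil (θ.val i) θ s o i :=
    fun o => DA.pdaUtil_truthful_nonneg θ s o hi (hθ i hi).1
  exact ⟨hIR, div_nonneg (Finset.sum_nonneg fun o _ => hIR o) (by positivity)⟩

/-- PDA is individually rational: for every buyer i with true type
θ_i, every report profile of the other buyers, and every order o, if i reports
truthfully then u_i^o ≥ 0; in particular her expected utility over the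
uniformly random order is non-negative. -/
theorem pda_IR {V : Type*} [Fintype V] [DecidableEq V]
    {k : ℕ} (hk : 1 ≤ k) (θ : DA.Profile V k) (s : V) (hθ : θ.Valid s)
    (i : V) (hi : i ≠ s) :
    (∀ o : V ≃ Fin (Fintype.card V), 0 ≤ DA.pdaUtil (θ.val i) θ s o i)
    ∧ 0 ≤ DA.pdaExpUtil (θ.val i) θ s i :=
  pda_IR_general θ s hθ i hi
end

section
/- For any finite set V, any function f : Finset V → ℝ, and any element i ∈ V, the average marginal contribution of i over all orderings equals the weighted sum over coalitions: (1/|V|!) · Σ_{o ∈ permutations of V} (f(o_{≼i}) − f(o_{≺i})) = Σ_{B ⊆ V∖{i}} [|B|!·(|V|−|B|−1)!/|V|!] · (f(B ∪ {i}) − f(B)), where o_{≺i} is the set of elements strictly preceding i in the ordering o and o_{≼i} = o_{≺i} ∪ {i}. -/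
/-!
Group the orderings `o` by the set `B` of predecessors of `i`. The orderings with predecessor set
`B` are those placing `B` on the first `|B|` positions and `i` at position `|B|`; they are pairs of
a bijection from `B` onto the first `|B|` positions and a bijection from the rest onto the later
positions sending `i` to `|B|`, hence there are `|B|! (|V| - |B| - 1)!` of them.
-/

open Finset Nat

namespace Equiv

variable {α β : Type*} (p : α → Prop) (q : β → Prop) [DecidablePred p] [DecidablePred q]

def subtypeCongrEquivProd :
    {e : α ≃ β // ∀ a, p a ↔ q (e a)} ≃
      ({a // p a} ≃ {b // q b}) × ({a // ¬p a} ≃ {b // ¬q b}) where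
  toFun e := (e.1.subtypeEquiv e.2, e.1.subtypeEquiv fun a => not_congr (e.2 a))
  invFun x := ⟨(sumCompl p).symm.trans ((sumCongr x.1 x.2).trans (sumCompl q)), fun a => by
    by_cases h : p a
    · simp [sumCompl_symm_apply_of_pos h, h, (x.1 ⟨a, h⟩).2]
    · simp [sumCompl_symm_apply_of_neg h, h, (x.2 ⟨a, h⟩).2]⟩
  left_inv e := by
    ext a
    by_cases h : p a
    · simp [sumCompl_symm_apply_of_pos h]
    · simp [sumCompl_symm_apply_of_neg h]
  right_inv x := by
    ext a
    · simp [sumCompl_symm_apply_of_pos a.2]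
    · simp [sumCompl_symm_apply_of_neg a.2]

end Equiv

namespace Fintype

variable {α β : Type*} [Fintype α] [Fintype β] [DecidableEq α] [DecidableEq β]

theorem card_subtype_equiv_forall_iff (p : α → Prop) (q : β → Prop) [DecidablePred p]
    [DecidablePred q] (hp : card {a // p a} = card {b // q b})
    (hnp : card {a // ¬p a} = card {b // ¬q b}) :
    card {e : α ≃ β // ∀ a, p a ↔ q (e a)} = (card {a // p a})! * (card {a // ¬p a})! := by
  rw [card_congr (Equiv.subtypeCongrEquivProd p q), card_prod,
    card_equiv (equivOfCardEq hp), card_equiv (equivOfCardEq hnp)]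

theorem card_subtype_equiv_apply_eq (h : card α = card β) (a : α) (b : β) :
    card {e : α ≃ β // e a = b} = (card α - 1)! := by
  have hiff (e : α ≃ β) : e a = b ↔ ∀ x, x = a ↔ e x = b := by
    refine ⟨fun he x => ?_, fun he => (he a).1 rfl⟩
    rw [← he, e.apply_eq_iff_eq]
  rw [card_congr (Equiv.subtypeEquivRight hiff)]
  convert card_subtype_equiv_forall_iff (· = a) (· = b) _ _ using 1
  all_goals simp [card_subtype_compl, h]

end Fintype

theorem Finset.filter_le_eq_insert_filter_lt {α β : Type*} [DecidableEq α] [LinearOrder β]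
    {f : α → β} (hf : Function.Injective f) {s : Finset α} {i : α} (hi : i ∈ s) :
    (s.filter fun j => f j ≤ f i) = insert i (s.filter fun j => f j < f i) := by
  ext j
  by_cases hj : j = i
  · simp [hj, hi]
  · simp [hj, le_iff_lt_or_eq, hf.eq_iff]

section Orderings

variable {V : Type*} [Fintype V]

theorem card_filter_apply_lt_apply {n : ℕ} (o : V ≃ Fin n) (i : V) :
    #(univ.filter fun j => o j < o i) = o i := by
  rw [card_equiv o (t := Iio (o i)) (by simp), Fin.card_Iio]

theorem filter_apply_lt_apply_eq_iff {n : ℕ} (o : V ≃ Fin n) (i : V) (B : Finset V) {k : Fin n}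
    (hk : #B = k) :
    (univ.filter fun j => o j < o i) = B ↔ o i = k ∧ ∀ j, j ∈ B ↔ o j < k := by
  constructor
  · rintro rfl
    have hi : o i = k := Fin.ext (by rw [← hk, card_filter_apply_lt_apply])
    simp [hi]
  · rintro ⟨rfl, hB⟩
    ext j
    simp [hB]

theorem card_filter_apply_lt_apply_eq [DecidableEq V] {i : V} {B : Finset V} (hi : i ∉ B) :
    #{o : V ≃ Fin (Fintype.card V) | (univ.filter fun j => o j < o i) = B} =
      (#B)! * (Fintype.card V - #B - 1)! := by
  set k : Fin (Fintype.card V) := ⟨#B, card_lt_univ_of_notMem hi⟩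
  rw [← Fintype.card_subtype]
  calc Fintype.card {o : V ≃ Fin (Fintype.card V) // (univ.filter fun j => o j < o i) = B}
      = Fintype.card {o : V ≃ Fin (Fintype.card V) // o i = k ∧ ∀ j, j ∈ B ↔ o j < k} :=
        Fintype.card_congr
          (Equiv.subtypeEquivRight fun o => filter_apply_lt_apply_eq_iff o i B rfl)
    _ = Fintype.card
          {o : {o : V ≃ Fin (Fintype.card V) // ∀ j, j ∈ B ↔ o j < k} // o.1 i = k} :=
        Fintype.card_congr ((Equiv.subtypeEquivRight fun _ => and_comm).trans
          (Equiv.subtypeSubtypeEquivSubtypeInter _ _).symm)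
    _ = Fintype.card {x : ({j // j ∉ B} ≃ {m // ¬m < k}) × (B ≃ {m // m < k}) //
          x.1 ⟨i, hi⟩ = ⟨k, lt_irrefl k⟩} :=
        Fintype.card_congr (Equiv.subtypeEquiv
          ((Equiv.subtypeCongrEquivProd (· ∈ B) (· < k)).trans (Equiv.prodComm _ _))
          fun o => by simp [Subtype.ext_iff, Equiv.subtypeCongrEquivProd])
    _ = Fintype.card {e : {j // j ∉ B} ≃ {m // ¬m < k} // e ⟨i, hi⟩ = ⟨k, lt_irrefl k⟩} *
          Fintype.card (B ≃ {m // m < k}) := by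
        rw [← Fintype.card_prod]
        exact Fintype.card_congr
          (Equiv.prodSubtypeFstEquivSubtypeProd
            (p := fun e : {j // j ∉ B} ≃ {m // ¬m < k} => e ⟨i, hi⟩ = ⟨k, lt_irrefl k⟩))
    _ = (#B)! * (Fintype.card V - #B - 1)! := by
        have hlt : Fintype.card {m // m < k} = #B := by
          rw [Fintype.card_subtype, filter_gt_eq_Iio, Fin.card_Iio]
        have hge : Fintype.card {m // ¬m < k} = Fintype.card V - #B := by
          rw [Fintype.card_subtype_compl, hlt, Fintype.card_fin]
        rw [Fintype.card_equiv (Fintype.equivOfCardEq (by rw [Fintype.card_coe, hlt])),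
          Fintype.card_subtype_equiv_apply_eq
            (by rw [hge, Fintype.card_subtype_compl, Fintype.card_coe]),
          Fintype.card_subtype_compl, Fintype.card_coe, mul_comm]

theorem sum_equiv_fin_comp_filter_apply_lt_apply [DecidableEq V] {M : Type*} [AddCommMonoid M]
    (i : V) (g : Finset V → M) :
    ∑ o : V ≃ Fin (Fintype.card V), g (univ.filter fun j => o j < o i) =
      ∑ B ∈ (univ.erase i).powerset, ((#B)! * (Fintype.card V - #B - 1)!) • g B := by
  have hmaps (o : V ≃ Fin (Fintype.card V)) (_ : o ∈ univ) :
      (univ.filter fun j => o j < o i) ∈ (univ.erase i).powerset := by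
    rw [mem_powerset]
    intro j hj
    simpa using (mem_filter.1 hj).2.ne
  rw [← sum_fiberwise_of_maps_to' hmaps]
  refine sum_congr rfl fun B hB => ?_
  rw [sum_const, card_filter_apply_lt_apply_eq fun hi => by simpa using mem_powerset.1 hB hi]

end Orderings

/-- For any finite set V, any set function f : Finset V → ℝ, and
any element i ∈ V, the average marginal contribution of i over all orderings
equals the weighted sum over coalitions:
(1/|V|!) · Σ_{o} (f(o_{≼i}) − f(o_{≺i}))
  = Σ_{B ⊆ V∖{i}} [|B|!·(|V|−|B|−1)!/|V|!] · (f(B ∪ {i}) − f(B)),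
where o_{≺i} is the set of elements strictly preceding i in the ordering o and
o_{≼i} = o_{≺i} ∪ {i}. -/
theorem shapley_permutation_eq_coalition {V : Type*} [Fintype V] [DecidableEq V]
    (f : Finset V → ℝ) (i : V) :
    (1 / ((Fintype.card V).factorial : ℝ)) *
      ∑ o : V ≃ Fin (Fintype.card V),
        (f (Finset.univ.filter fun j => o j ≤ o i)
          - f (Finset.univ.filter fun j => o j < o i))
    = ∑ B ∈ (Finset.univ.erase i).powerset,
        ((B.card.factorial * (Fintype.card V - B.card - 1).factorial : ℝ) /
          ((Fintype.card V).factorial : ℝ)) *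
        (f (insert i B) - f B) := by
  have hmarginal (o : V ≃ Fin (Fintype.card V)) :
      f (univ.filter fun j => o j ≤ o i) = f (insert i (univ.filter fun j => o j < o i)) :=
    congrArg f (filter_le_eq_insert_filter_lt o.injective (mem_univ i))
  simp only [hmarginal]
  rw [sum_equiv_fin_comp_filter_apply_lt_apply i fun B => f (insert i B) - f B, mul_sum]
  refine sum_congr rfl fun B _ => ?_
  rw [nsmul_eq_mul]
  push_cast
  ring
end
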